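/- Diamond criterion: if for every element a and successor distributions E, F with a ↦ E and a ↦ F there exists C with E (≈∘⇒_P∘≈) C and F (≈∘⇒_P∘≈) C, then the relation ⇒_P modulo ≈ has the diamond property on all distributions, and hence the PARS is distribution confluent. -/

import Mathlib

open Relation
open scoped NNReal

abbrev PDist (A : Type) := List (ℝ≥0 × A)

namespace PPARS

variable {A X : Type}

/-- Total weight of a list distribution. -/
def weight (D : PDist A) : ℝ≥0 := (D.map Prod.fst).sum

/-- Scale every weight of a distribution by `α`. -/
def scale (α : ℝ≥0) (D : PDist A) : PDist A := D.map (fun pa => (α * pa.1, pa.2))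

open Classical in
/-- Total weight that `D` assigns to the element `a`. -/
noncomputable def wt (D : PDist A) (a : A) : ℝ≥0 :=
  (D.map (fun pa => if pa.2 = a then pa.1 else 0)).sum

/-- The Flip rule, closed under list contexts. -/
inductive FlipS : PDist A → PDist A → Prop
  | mk (E₁ E₂ : PDist A) (p q : ℝ≥0) (a b : A) :
      FlipS (E₁ ++ [(p,a),(q,b)] ++ E₂) (E₁ ++ [(q,b),(p,a)] ++ E₂)

/-- The Join rule, closed under list contexts. -/
inductive JoinS : PDist A → PDist A → Prop
  | mk (E₁ E₂ : PDist A) (p q : ℝ≥0) (a : A) :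
      JoinS (E₁ ++ [(p,a),(q,a)] ++ E₂) (E₁ ++ [(p+q,a)] ++ E₂)

/-- The Split rule, closed under list contexts. -/
inductive SplitS : PDist A → PDist A → Prop
  | mk (E₁ E₂ : PDist A) (p q : ℝ≥0) (a : A) :
      SplitS (E₁ ++ [(p+q,a)] ++ E₂) (E₁ ++ [(p,a),(q,a)] ++ E₂)

/-- One `∼`-step: congruence closure of Flip, Join and Split. -/
def SimStep (D E : PDist A) : Prop := FlipS D E ∨ JoinS D E ∨ SplitS D E

/-- One Flip-or-Join step. -/
def FJ (D E : PDist A) : Prop := FlipS D E ∨ JoinS D E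

/-- Distribution equivalence `≈`. -/
def DEquiv : PDist A → PDist A → Prop := ReflTransGen SimStep

/-- Parallel evolution `⇒_P` for a PARS relation `R`. -/
inductive PEvol (R : A → PDist A → Prop) : PDist A → PDist A → Prop
  | nil : PEvol R [] []
  | keep {ds ds' : PDist A} (p : ℝ≥0) (a : A) :
      PEvol R ds ds' → PEvol R ((p,a) :: ds) ((p,a) :: ds')
  | evolve {a : A} {D ds ds' : PDist A} (p : ℝ≥0) :
      R a D → PEvol R ds ds' → PEvol R ((p,a) :: ds) (scale p D ++ ds')

/-- Proper parallel evolution `⇒_P¹`: at least one element evolves. -/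
inductive PEvol1 (R : A → PDist A → Prop) : PDist A → PDist A → Prop
  | evolve {a : A} {D ds ds' : PDist A} (p : ℝ≥0) :
      R a D → PEvol R ds ds' → PEvol1 R ((p,a) :: ds) (scale p D ++ ds')
  | keep {ds ds' : PDist A} (p : ℝ≥0) (a : A) :
      PEvol1 R ds ds' → PEvol1 R ((p,a) :: ds) ((p,a) :: ds')

/-- The determinisation relation `↠ = ⇒_P ∪ ≈`. -/
def Red (R : A → PDist A → Prop) (D E : PDist A) : Prop := PEvol R D E ∨ DEquiv D E

/-- `R` defines a PARS: successor distributions are normalised. -/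
def IsPARS (R : A → PDist A → Prop) : Prop := ∀ a D, R a D → weight D = 1

/-- A terminal element has no successor distribution. -/
def Terminal (R : A → PDist A → Prop) (a : A) : Prop := ∀ D, ¬ R a D

/-- A terminal distribution contains only terminal elements. -/
def TerminalD (R : A → PDist A → Prop) (D : PDist A) : Prop := ∀ pa ∈ D, Terminal R pa.2

/-- Classical confluence of a relation. -/
def Confluent (r : X → X → Prop) : Prop :=
  ∀ a b c, ReflTransGen r a b → ReflTransGen r a c →
    ∃ d, ReflTransGen r b d ∧ ReflTransGen r c d

/-- Raw (finite) computation trees. -/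
inductive CTree (A : Type) where
  | leaf (a : A)
  | node (a : A) (cs : List (ℝ≥0 × CTree A))

def CTree.root : CTree A → A
  | .leaf a => a
  | .node a _ => a

/-- `IsTree R t a`: `t` is a computation tree of the PARS `R` with root `a`. -/
inductive IsTree (R : A → PDist A → Prop) : CTree A → A → Prop
  | leaf (a : A) : IsTree R (.leaf a) a
  | node (a : A) (cs : List (ℝ≥0 × CTree A)) :
      R a (cs.map fun x => (x.1, x.2.root)) →
      (∀ x ∈ cs, IsTree R x.2 x.2.root) →
      IsTree R (.node a cs) a

mutual
/-- Support of a computation tree. -/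
def supp : CTree A → PDist A
  | .leaf a => [(1, a)]
  | .node _ cs => suppL cs
def suppL : List (ℝ≥0 × CTree A) → PDist A
  | [] => []
  | (p, t) :: ts => scale p (supp t) ++ suppL ts
end

/-- A tree is maximal when all its leaves are terminal elements. -/
inductive MaximalT (R : A → PDist A → Prop) : CTree A → Prop
  | leaf (a : A) : Terminal R a → MaximalT R (.leaf a)
  | node (a : A) (cs : List (ℝ≥0 × CTree A)) :
      (∀ x ∈ cs, MaximalT R x.2) → MaximalT R (.node a cs)

end PPARS


namespace PPARS
variable {A X : Type}

/-- `R` modulo `≈`: an equivalence step, then `r`, then an equivalence step. -/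
def ModE (r : PDist A → PDist A → Prop) : PDist A → PDist A → Prop :=
  Relation.Comp DEquiv (Relation.Comp r DEquiv)

/-- `n`-fold composition of a relation. -/
def npow (r : X → X → Prop) : ℕ → X → X → Prop
  | 0 => Eq
  | n+1 => Relation.Comp r (npow r n)

/-- A local relation on distributions. -/
def LocalRel (r : PDist A → PDist A → Prop) : Prop :=
  ∀ (α β : ℝ≥0) (D₁ D₂ E : PDist A), r (scale α D₁ ++ scale β D₂) E →
    ∃ E₁ E₂, E = scale α E₁ ++ scale β E₂ ∧ r D₁ E₁ ∧ r D₂ E₂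

/-- A compositional relation on distributions. -/
def Compositional (r : PDist A → PDist A → Prop) : Prop :=
  ∀ (α β : ℝ≥0) (D₁ E₁ D₂ E₂ : PDist A), r D₁ E₁ → r D₂ E₂ →
    r (scale α D₁ ++ scale β D₂) (scale α E₁ ++ scale β E₂)

/-- `(γ, δ)` closes `(α, β)` on `D`. -/
def Closes (γ δ α β : PDist A → PDist A → Prop) (D : PDist A) : Prop :=
  ∀ E F, α D E → β D F → ∃ C, γ E C ∧ δ F C

open Classical in
/-- Liveness: total weight assigned to non-terminal elements. -/
noncomputable def liv (R : A → PDist A → Prop) (D : PDist A) : ℝ≥0 :=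
  (D.map (fun pa => if Terminal R pa.2 then 0 else pa.1)).sum

/-- L¹ distance between mathematical distributions. -/
noncomputable def fdist (f g : A → ℝ≥0) : ℝ := ∑' a : A, |(f a : ℝ) - (g a : ℝ)|

/-- L¹ distance between the mathematical distributions induced by two list
distributions. -/
noncomputable def ldist (D E : PDist A) : ℝ := fdist (wt D) (wt E)

end PPARS

/-!
A `⇒_P`-peak whose two sources are only `≈`-equivalent is reduced to a peak with a common
source. Viewed as multisets, `≈` is the equivalence generated by splitting one entry
`(p + q, a)` into `(p, a), (q, a)`; splitting is strongly confluent (two splits of the same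
entry are refined by cutting at both points), so equivalent distributions have a common
refinement. A refinement can mimic every parallel evolution of the coarser distribution up to
`≈`, since the pieces of a split entry may all follow the step that the entry takes. Over a
common source the peak closes entry by entry: entries evolving differently are joined by the
hypothesis on `↦`-peaks, scaled by the entry's weight. Finally, `⇒_P mod ≈` contains `↠` and
is contained in its reflexive-transitive closure, so its diamond property gives confluence.
-/

namespace PPARS

variable {A X : Type} {R : A → PDist A → Prop}

@[simp] lemma scale_cons (α p : ℝ≥0) (a : A) (D : PDist A) :
    scale α ((p, a) :: D) = (α * p, a) :: scale α D := rfl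

@[simp] lemma scale_append (α : ℝ≥0) (D E : PDist A) :
    scale α (D ++ E) = scale α D ++ scale α E := List.map_append

@[simp] lemma scale_scale (α β : ℝ≥0) (D : PDist A) :
    scale α (scale β D) = scale (α * β) D := by
  simp [scale, Function.comp_def, mul_assoc]

lemma SimStep.symm {D E : PDist A} : SimStep D E → SimStep E D
  | .inl ⟨E₁, E₂, p, q, a, b⟩ => .inl (FlipS.mk E₁ E₂ q p b a)
  | .inr (.inl ⟨E₁, E₂, p, q, a⟩) => .inr (.inr (SplitS.mk E₁ E₂ p q a))
  | .inr (.inr ⟨E₁, E₂, p, q, a⟩) => .inr (.inl (JoinS.mk E₁ E₂ p q a))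

lemma SimStep.context {D E : PDist A} (X Y : PDist A) (h : SimStep D E) :
    SimStep (X ++ D ++ Y) (X ++ E ++ Y) := by
  rcases h with ⟨E₁, E₂, p, q, a, b⟩ | ⟨E₁, E₂, p, q, a⟩ | ⟨E₁, E₂, p, q, a⟩
  · simpa [SimStep] using Or.inl (FlipS.mk (X ++ E₁) (E₂ ++ Y) p q a b)
  · simpa [SimStep] using Or.inr (Or.inl (JoinS.mk (X ++ E₁) (E₂ ++ Y) p q a))
  · simpa [SimStep] using Or.inr (Or.inr (SplitS.mk (X ++ E₁) (E₂ ++ Y) p q a))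

protected lemma SimStep.scale {D E : PDist A} (α : ℝ≥0) (h : SimStep D E) :
    SimStep (scale α D) (scale α E) := by
  rcases h with ⟨E₁, E₂, p, q, a, b⟩ | ⟨E₁, E₂, p, q, a⟩ | ⟨E₁, E₂, p, q, a⟩
  · simpa [SimStep] using Or.inl (FlipS.mk (scale α E₁) (scale α E₂) (α * p) (α * q) a b)
  · simpa [SimStep, mul_add] using
      Or.inr (Or.inl (JoinS.mk (scale α E₁) (scale α E₂) (α * p) (α * q) a))
  · simpa [SimStep, mul_add] using
      Or.inr (Or.inr (SplitS.mk (scale α E₁) (scale α E₂) (α * p) (α * q) a))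

namespace DEquiv

lemma refl (D : PDist A) : DEquiv D D := ReflTransGen.refl

lemma trans {D E F : PDist A} : DEquiv D E → DEquiv E F → DEquiv D F := ReflTransGen.trans

lemma symm {D E : PDist A} (h : DEquiv D E) : DEquiv E D := by
  induction h with
  | refl => exact refl D
  | tail _ hstep ih => exact ReflTransGen.head hstep.symm ih

lemma context {D E : PDist A} (X Y : PDist A) (h : DEquiv D E) :
    DEquiv (X ++ D ++ Y) (X ++ E ++ Y) :=
  ReflTransGen.lift (fun D => X ++ D ++ Y) (fun _ _ => SimStep.context X Y) _ _ h

lemma append {D₁ E₁ D₂ E₂ : PDist A} (h₁ : DEquiv D₁ E₁) (h₂ : DEquiv D₂ E₂) :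
    DEquiv (D₁ ++ D₂) (E₁ ++ E₂) :=
  trans (by simpa using context [] D₂ h₁) (by simpa using context E₁ [] h₂)

protected lemma scale {D E : PDist A} (α : ℝ≥0) (h : DEquiv D E) :
    DEquiv (scale α D) (scale α E) :=
  ReflTransGen.lift (scale α) (fun _ _ => SimStep.scale α) _ _ h

lemma of_perm {D E : PDist A} (h : D.Perm E) : DEquiv D E := by
  induction h with
  | nil => exact refl []
  | cons x _ ih => exact append (refl [x]) ih
  | swap x y l => exact ReflTransGen.single (Or.inl (FlipS.mk [] l y.1 x.1 y.2 x.2))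
  | trans _ _ ih₁ ih₂ => exact ih₁.trans ih₂

lemma scale_add (C : PDist A) (p q : ℝ≥0) :
    DEquiv (scale (p + q) C) (scale p C ++ scale q C) := by
  induction C with
  | nil => exact refl []
  | cons x C ih =>
      obtain ⟨r, z⟩ := x
      have hsplit : SimStep (((p + q) * r, z) :: scale (p + q) C)
          ((p * r, z) :: (q * r, z) :: scale (p + q) C) := by
        simpa [SimStep, add_mul] using
          Or.inr (Or.inr (SplitS.mk [] (scale (p + q) C) (p * r) (q * r) z))
      have hmiddle : DEquiv ((p * r, z) :: (q * r, z) :: (scale p C ++ scale q C))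
          ((p * r, z) :: (scale p C ++ (q * r, z) :: scale q C)) :=
        append (refl [(p * r, z)]) (of_perm List.perm_middle.symm)
      exact (ReflTransGen.head hsplit
        (append (refl [(p * r, z), (q * r, z)]) ih)).trans hmiddle

end DEquiv

namespace PEvol

lemma refl (D : PDist A) : PEvol R D D := by
  induction D with
  | nil => exact nil
  | cons x D ih => exact keep x.1 x.2 ih

lemma append {D₁ E₁ D₂ E₂ : PDist A} (h₁ : PEvol R D₁ E₁) (h₂ : PEvol R D₂ E₂) :
    PEvol R (D₁ ++ D₂) (E₁ ++ E₂) := by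
  induction h₁ with
  | nil => exact h₂
  | keep p a _ ih => exact keep p a ih
  | evolve p ha _ ih => simpa using evolve p ha ih

protected lemma scale {D E : PDist A} (α : ℝ≥0) (h : PEvol R D E) :
    PEvol R (scale α D) (scale α E) := by
  induction h with
  | nil => exact nil
  | keep p a _ ih => exact keep (α * p) a ih
  | evolve p ha _ ih => simpa using evolve (α * p) ha ih

lemma singleton {p : ℝ≥0} {a : A} {D : PDist A} (ha : R a D) :
    PEvol R [(p, a)] (scale p D) := by
  simpa using evolve p ha nil

lemma cons_inv {x : ℝ≥0 × A} {D E : PDist A} (h : PEvol R (x :: D) E) :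
    ∃ B E', E = B ++ E' ∧ PEvol R [x] B ∧ PEvol R D E' := by
  cases h with
  | keep p a h' => exact ⟨[(p, a)], _, rfl, refl _, h'⟩
  | evolve p ha h' => exact ⟨_, _, rfl, singleton ha, h'⟩

lemma exists_of_perm {D D' E : PDist A} (hE : PEvol R D E) (hD : D.Perm D') :
    ∃ E', PEvol R D' E' ∧ DEquiv E E' := by
  induction hD generalizing E with
  | nil => exact ⟨E, hE, DEquiv.refl E⟩
  | cons x _ ih =>
      obtain ⟨B, E₁, rfl, hB, h₁⟩ := cons_inv hE
      obtain ⟨E₁', h₁', he⟩ := ih h₁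
      exact ⟨B ++ E₁', append hB h₁', DEquiv.append (DEquiv.refl B) he⟩
  | swap x y l =>
      obtain ⟨By, E₁, rfl, hy, h₁⟩ := cons_inv hE
      obtain ⟨Bx, E₂, rfl, hx, h₂⟩ := cons_inv h₁
      refine ⟨Bx ++ (By ++ E₂), append hx (append hy h₂), DEquiv.of_perm ?_⟩
      simpa using List.perm_append_comm.append_right E₂
  | trans _ _ ih₁ ih₂ =>
      obtain ⟨E₁, h₁, he₁⟩ := ih₁ hE
      obtain ⟨E₂, h₂, he₂⟩ := ih₂ h₁
      exact ⟨E₂, h₂, he₁.trans he₂⟩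

lemma exists_of_split {p q : ℝ≥0} {a : A} {L E : PDist A} (h : PEvol R ((p + q, a) :: L) E) :
    ∃ E', PEvol R ((p, a) :: (q, a) :: L) E' ∧ DEquiv E E' := by
  cases h with
  | keep _ _ h' =>
      exact ⟨_, keep p a (keep q a h'), ReflTransGen.single
        (by simpa [SimStep] using Or.inr (Or.inr (SplitS.mk [] _ p q a)))⟩
  | evolve _ ha h' =>
      refine ⟨_, evolve p ha (evolve q ha h'), ?_⟩
      simpa using DEquiv.append (DEquiv.scale_add _ p q) (DEquiv.refl _)

end PEvol

def MultisetSplit (M N : Multiset (ℝ≥0 × A)) : Prop :=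
  ∃ p q a r, M = (p + q, a) ::ₘ r ∧ N = (p, a) ::ₘ (q, a) ::ₘ r

lemma multisetSplit_refine {p q p' q' : ℝ≥0} {a : A} {r : Multiset (ℝ≥0 × A)}
    (hp : p ≤ p') (hsum : p + q = p' + q') :
    Join MultisetSplit ((p, a) ::ₘ (q, a) ::ₘ r) ((p', a) ::ₘ (q', a) ::ₘ r) := by
  have hq : q = (p' - p) + q' := by
    rw [tsub_add_eq_add_tsub hp, ← hsum, add_tsub_cancel_left]
  refine ⟨(p, a) ::ₘ (p' - p, a) ::ₘ (q', a) ::ₘ r,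
    ⟨p' - p, q', a, (p, a) ::ₘ r, ?_, ?_⟩, ⟨p, p' - p, a, (q', a) ::ₘ r, ?_, rfl⟩⟩
  · rw [hq, Multiset.cons_swap]
  · simp only [← Multiset.singleton_add]; ac_rfl
  · rw [add_tsub_cancel_of_le hp]

lemma multisetSplit_diamond (M N₁ N₂ : Multiset (ℝ≥0 × A)) (h₁ : MultisetSplit M N₁)
    (h₂ : MultisetSplit M N₂) : Join MultisetSplit N₁ N₂ := by
  obtain ⟨p, q, a, r, rfl, rfl⟩ := h₁
  obtain ⟨p', q', a', r', hM, rfl⟩ := h₂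
  rcases Multiset.cons_eq_cons.1 hM with ⟨hx, rfl⟩ | ⟨-, r₀, rfl, rfl⟩
  · obtain ⟨hsum, rfl⟩ := Prod.ext_iff.1 hx
    rcases le_total p p' with hp | hp
    · exact multisetSplit_refine hp hsum
    · exact Join.symm.symm _ _ (multisetSplit_refine hp hsum.symm)
  · refine ⟨(p, a) ::ₘ (q, a) ::ₘ (p', a') ::ₘ (q', a') ::ₘ r₀,
      ⟨p', q', a', (p, a) ::ₘ (q, a) ::ₘ r₀, ?_, ?_⟩,
      ⟨p, q, a, (p', a') ::ₘ (q', a') ::ₘ r₀, ?_, rfl⟩⟩ <;>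
    · simp only [← Multiset.singleton_add]; ac_rfl

lemma multisetSplit_coe (E₁ E₂ : PDist A) (p q : ℝ≥0) (a : A) :
    MultisetSplit ((E₁ ++ [(p + q, a)] ++ E₂ : PDist A) : Multiset (ℝ≥0 × A))
      (E₁ ++ [(p, a), (q, a)] ++ E₂ : PDist A) :=
  ⟨p, q, a, ↑(E₁ ++ E₂), by simp [← Multiset.coe_add, ← Multiset.singleton_add]; abel,
    by simp [← Multiset.coe_add, ← Multiset.singleton_add]; abel⟩

lemma join_multisetSplit_of_dequiv {D E : PDist A} (h : DEquiv D E) :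
    Join (ReflTransGen MultisetSplit) (D : Multiset (ℝ≥0 × A)) E := by
  have hequiv := equivalence_join_reflTransGen (r := MultisetSplit (A := A))
    fun M N₁ N₂ h₁ h₂ => (multisetSplit_diamond M N₁ N₂ h₁ h₂).imp
      fun _ hN => ⟨ReflGen.single hN.1, .single hN.2⟩
  induction h with
  | refl => exact hequiv.refl _
  | tail _ hstep ih =>
      refine hequiv.trans ih ?_
      rcases hstep with ⟨E₁, E₂, p, q, a, b⟩ | ⟨E₁, E₂, p, q, a⟩ | ⟨E₁, E₂, p, q, a⟩
      · have hperm : (E₁ ++ [(p, a), (q, b)] ++ E₂).Perm (E₁ ++ [(q, b), (p, a)] ++ E₂) := by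
          simpa using (List.Perm.swap (q, b) (p, a) E₂).append_left E₁
        rw [Multiset.coe_eq_coe.2 hperm]
        exact hequiv.refl _
      · exact ⟨_, .refl, .single (multisetSplit_coe E₁ E₂ p q a)⟩
      · exact ⟨_, .single (multisetSplit_coe E₁ E₂ p q a), .refl⟩

namespace PEvol

lemma exists_of_multisetSplit {D E : PDist A} {M : Multiset (ℝ≥0 × A)} (hE : PEvol R D E)
    (hM : MultisetSplit (D : Multiset (ℝ≥0 × A)) M) :
    ∃ (D' E' : PDist A), (D' : Multiset (ℝ≥0 × A)) = M ∧ PEvol R D' E' ∧ DEquiv E E' := by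
  obtain ⟨p, q, a, r, hD, rfl⟩ := hM
  obtain ⟨L, rfl⟩ := Quot.exists_rep r
  obtain ⟨E₁, h₁, he₁⟩ := hE.exists_of_perm (Multiset.coe_eq_coe.1 hD)
  obtain ⟨E₂, h₂, he₂⟩ := exists_of_split h₁
  exact ⟨_, E₂, rfl, h₂, he₁.trans he₂⟩

lemma exists_of_reflTransGen_multisetSplit {D E : PDist A} {M : Multiset (ℝ≥0 × A)}
    (hE : PEvol R D E) (hM : ReflTransGen MultisetSplit (D : Multiset (ℝ≥0 × A)) M) :
    ∃ (D' E' : PDist A), (D' : Multiset (ℝ≥0 × A)) = M ∧ PEvol R D' E' ∧ DEquiv E E' := by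
  induction hM with
  | refl => exact ⟨D, E, rfl, hE, DEquiv.refl E⟩
  | tail _ hstep ih =>
      obtain ⟨D₁, E₁, rfl, h₁, he₁⟩ := ih
      obtain ⟨D₂, E₂, rfl, h₂, he₂⟩ := exists_of_multisetSplit h₁ hstep
      exact ⟨D₂, E₂, rfl, h₂, he₁.trans he₂⟩

end PEvol

namespace ModE

lemma of_pevol {D E : PDist A} (h : PEvol R D E) : ModE (PEvol R) D E :=
  ⟨D, DEquiv.refl D, E, h, DEquiv.refl E⟩

lemma refl (D : PDist A) : ModE (PEvol R) D D := of_pevol (PEvol.refl D)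

lemma dequiv_left {D₀ D E : PDist A} (m : ModE (PEvol R) D E) (h : DEquiv D₀ D) :
    ModE (PEvol R) D₀ E :=
  let ⟨D', h₁, E', h₂, h₃⟩ := m
  ⟨D', h.trans h₁, E', h₂, h₃⟩

lemma append {D₁ E₁ D₂ E₂ : PDist A} (m₁ : ModE (PEvol R) D₁ E₁)
    (m₂ : ModE (PEvol R) D₂ E₂) : ModE (PEvol R) (D₁ ++ D₂) (E₁ ++ E₂) :=
  let ⟨_, a₁, _, b₁, c₁⟩ := m₁
  let ⟨_, a₂, _, b₂, c₂⟩ := m₂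
  ⟨_, a₁.append a₂, _, b₁.append b₂, c₁.append c₂⟩

protected lemma scale {D E : PDist A} (α : ℝ≥0) (m : ModE (PEvol R) D E) :
    ModE (PEvol R) (scale α D) (scale α E) :=
  let ⟨_, a, _, b, c⟩ := m
  ⟨_, a.scale α, _, b.scale α, c.scale α⟩

lemma reflTransGen_red {D E : PDist A} (m : ModE (PEvol R) D E) :
    ReflTransGen (Red R) D E :=
  let ⟨_, a, _, b, c⟩ := m
  .head (.inr a) (.head (.inl b) (.single (.inr c)))

end ModE

lemma Red.modE {D E : PDist A} : Red R D E → ModE (PEvol R) D E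
  | .inl h => .of_pevol h
  | .inr h => ModE.refl E |>.dequiv_left h

lemma PEvol.join_modE (h : ∀ a E F, R a E → R a F → Join (ModE (PEvol R)) E F)
    {D E F : PDist A} (h₁ : PEvol R D E) (h₂ : PEvol R D F) : Join (ModE (PEvol R)) E F := by
  induction h₁ generalizing F with
  | nil => cases h₂; exact ⟨[], ModE.refl _, ModE.refl _⟩
  | keep p a _ ih =>
      cases h₂ with
      | keep _ _ h₂' =>
          obtain ⟨C, m₁, m₂⟩ := ih h₂'
          exact ⟨(p, a) :: C, (ModE.refl [(p, a)]).append m₁, (ModE.refl [(p, a)]).append m₂⟩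
      | evolve _ hb h₂' =>
          obtain ⟨C, m₁, m₂⟩ := ih h₂'
          exact ⟨_, (ModE.of_pevol (singleton hb)).append m₁, (ModE.refl _).append m₂⟩
  | evolve p ha _ ih =>
      cases h₂ with
      | keep _ _ h₂' =>
          obtain ⟨C, m₁, m₂⟩ := ih h₂'
          exact ⟨_, (ModE.refl _).append m₁, (ModE.of_pevol (singleton ha)).append m₂⟩
      | evolve _ hb h₂' =>
          obtain ⟨C₀, ma, mb⟩ := h _ _ _ ha hb
          obtain ⟨C, m₁, m₂⟩ := ih h₂'
          exact ⟨scale p C₀ ++ C, (ma.scale p).append m₁, (mb.scale p).append m₂⟩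

lemma join_modE_of_dequiv (h : ∀ a E F, R a E → R a F → Join (ModE (PEvol R)) E F)
    {D₁ D₂ E F : PDist A} (hD : DEquiv D₁ D₂) (h₁ : PEvol R D₁ E) (h₂ : PEvol R D₂ F) :
    Join (ModE (PEvol R)) E F := by
  obtain ⟨M, hM₁, hM₂⟩ := join_multisetSplit_of_dequiv hD
  obtain ⟨D₁', E', hD₁', h₁', hE⟩ := h₁.exists_of_reflTransGen_multisetSplit hM₁
  obtain ⟨D₂', F', hD₂', h₂', hF⟩ := h₂.exists_of_reflTransGen_multisetSplit hM₂
  obtain ⟨F'', h₂'', hF'⟩ := h₂'.exists_of_perm (Multiset.coe_eq_coe.1 (hD₂'.trans hD₁'.symm))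
  obtain ⟨C, hEC, hFC⟩ := PEvol.join_modE h h₁' h₂''
  exact ⟨C, hEC.dequiv_left hE, hFC.dequiv_left (hF.trans hF')⟩

lemma modE_diamond (h : ∀ a E F, R a E → R a F → Join (ModE (PEvol R)) E F)
    (D E F : PDist A) (hE : ModE (PEvol R) D E) (hF : ModE (PEvol R) D F) :
    Join (ModE (PEvol R)) E F := by
  obtain ⟨D₁, hD₁, E₁, h₁, hE₁⟩ := hE
  obtain ⟨D₂, hD₂, F₁, h₂, hF₁⟩ := hF
  obtain ⟨C, hEC, hFC⟩ := join_modE_of_dequiv h (hD₁.symm.trans hD₂) h₁ h₂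
  exact ⟨C, hEC.dequiv_left hE₁.symm, hFC.dequiv_left hF₁.symm⟩

lemma confluent_of_le_of_diamond {r s : X → X → Prop} (hrs : r ≤ s) (hsr : s ≤ ReflTransGen r)
    (hs : ∀ a b c, s a b → s a c → Join s b c) : Confluent r := by
  intro a b c hab hac
  obtain ⟨d, hbd, hcd⟩ := church_rosser
    (fun a b c hab hac => (hs a b c hab hac).imp fun _ hd => ⟨.single hd.1, .single hd.2⟩)
    (ReflTransGen.mono hrs _ _ hab) (ReflTransGen.mono hrs _ _ hac)
  exact ⟨d, ReflTransGen.lift' id hsr _ _ hbd, ReflTransGen.lift' id hsr _ _ hcd⟩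

end PPARS

open PPARS Relation in
/-- Diamond criterion: closing all `↦`-peaks by `≈ ∘ ⇒_P ∘ ≈` gives the diamond
property for `⇒_P` modulo `≈` on all distributions, hence distribution confluence. -/
theorem diamond_criterion {A : Type} (R : A → PDist A → Prop) (hR : IsPARS R)
    (h : ∀ (a : A) (E F : PDist A), R a E → R a F →
      ∃ C, ModE (PEvol R) E C ∧ ModE (PEvol R) F C) :
    (∀ D E F : PDist A, ModE (PEvol R) D E → ModE (PEvol R) D F →
      ∃ C, ModE (PEvol R) E C ∧ ModE (PEvol R) F C) ∧ Confluent (Red R) :=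
  ⟨modE_diamond h, confluent_of_le_of_diamond (fun _ _ => Red.modE)
    (fun _ _ => ModE.reflTransGen_red) (modE_diamond h)⟩
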